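/- Let A be a real m × n matrix, b ∈ ℝᵐ, λ > 0, a > 0, and 0 < μ < 1/‖A‖₂². Define C₁(x) = ‖Ax − b‖₂² + λ P_a(x), C₂(x, z) = μ(C₁(x) − ‖Ax − Az‖₂²) + ‖x − z‖₂², B_μ(z) = z + μ Aᵀ(b − Az), and let ∇₊ denote the componentwise positive part. Let (x^k) be a sequence of nonnegative vectors such that for each k, x^{k+1} is a global minimizer of C₂(·, x^k) over {x ∈ ℝⁿ : x ≥ 0}. Then every accumulation point x* of (x^k) satisfies x* ≥ 0 and is a global minimizer over all of ℝⁿ of x ↦ ‖x − ∇₊(B_μ(x*))‖₂² + λμ P_a(x); that is, x* is a fixed point of the thresholding iteration. -/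

import Mathlib

open Matrix Filter Topology

noncomputable def rho (a t : ℝ) : ℝ := a * |t| / (a * |t| + 1)

noncomputable def Pa {n : ℕ} (a : ℝ) (x : Fin n → ℝ) : ℝ := ∑ i, rho a (x i)

open scoped Classical in
noncomputable def l0 {n : ℕ} (x : Fin n → ℝ) : ℕ :=
  (Finset.univ.filter fun i => x i ≠ 0).card

def SOL {m n : ℕ} (A : Matrix (Fin m) (Fin n) ℝ) (b : Fin m → ℝ) : Set (Fin n → ℝ) :=
  {x | A.mulVec x = b ∧ 0 ≤ x}

noncomputable def sqN {n : ℕ} (v : Fin n → ℝ) : ℝ := ∑ i, (v i) ^ 2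

def projPos {n : ℕ} (v : Fin n → ℝ) : Fin n → ℝ := fun i => max 0 (v i)

noncomputable def C1 {m n : ℕ} (A : Matrix (Fin m) (Fin n) ℝ) (b : Fin m → ℝ)
    (lam a : ℝ) (x : Fin n → ℝ) : ℝ :=
  sqN (A.mulVec x - b) + lam * Pa a x

noncomputable def C2 {m n : ℕ} (A : Matrix (Fin m) (Fin n) ℝ) (b : Fin m → ℝ)
    (lam a mu : ℝ) (x z : Fin n → ℝ) : ℝ :=
  mu * (C1 A b lam a x - sqN (A.mulVec x - A.mulVec z)) + sqN (x - z)

noncomputable def Bmu {m n : ℕ} (A : Matrix (Fin m) (Fin n) ℝ) (b : Fin m → ℝ)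
    (mu : ℝ) (z : Fin n → ℝ) : Fin n → ℝ :=
  z + mu • (Aᵀ.mulVec (b - A.mulVec z))

/-!
Up to a term depending only on `z`, the surrogate `C2 · z` is `‖x - B_μ z‖² + λμ P_a x`, and since
`μ‖A‖² < 1` it majorizes `μ C1` with equality `C2 z z = μ C1 z`. Hence `μ C1 (x^k)` decreases by at
least `(1 - μ‖A‖²)‖x^{k+1} - x^k‖²` per step, the steps tend to `0`, and passing to the limit along
a subsequence shows that `x*` minimizes `C2 · x*` over the nonnegative orthant. That problem is
separable, and because `ρ_a` is even and minimal at `0`, a minimizer over `[0, ∞)` of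
`(t - B)² + c ρ_a t` is a global minimizer of `(t - max 0 B)² + c ρ_a t`.
-/

open Set

open scoped Matrix.Norms.L2Operator

lemma tendsto_atTop_zero_of_succ_add_mul_le {e s : ℕ → ℝ} {c : ℝ} (hc : 0 < c)
    (he : ∀ k, 0 ≤ e k) (hs : ∀ k, 0 ≤ s k) (h : ∀ k, e (k + 1) + c * s k ≤ e k) :
    Tendsto s atTop (𝓝 0) := by
  have htele : ∀ N, c * ∑ k ∈ Finset.range N, s k + e N ≤ e 0 := by
    intro N
    induction N with
    | zero => simp
    | succ N ih => rw [Finset.sum_range_succ]; linarith [h N]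
  refine (summable_of_sum_range_le hs (c := e 0 / c) fun N => ?_).tendsto_atTop_zero
  rw [le_div_iff₀ hc, mul_comm]
  linarith [htele N, he N]

lemma MapClusterPt.isMinOn_of_isMinOn_succ {X : Type*} [TopologicalSpace X] [AddGroup X]
    [IsTopologicalAddGroup X] [FirstCountableTopology X] {f : X → X → ℝ}
    (hf : Continuous (Function.uncurry f)) {S : Set X} {x : ℕ → X} {xs : X}
    (hcl : MapClusterPt xs atTop x) (hdiff : Tendsto (fun k => x (k + 1) - x k) atTop (𝓝 0))
    (hstep : ∀ k, IsMinOn (f · (x k)) S (x (k + 1))) : IsMinOn (f · xs) S xs := by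
  obtain ⟨ψ, hψ, hlim⟩ := hcl.tendsto_subseq
  have hlim' : Tendsto (fun j => x (ψ j + 1)) atTop (𝓝 xs) := by
    simpa using (hdiff.comp hψ.tendsto_atTop).add hlim
  refine isMinOn_iff.2 fun y hy => le_of_tendsto_of_tendsto'
    ((hf.tendsto (xs, xs)).comp (hlim'.prodMk_nhds hlim))
    ((hf.tendsto (y, xs)).comp (tendsto_const_nhds.prodMk_nhds hlim))
    fun j => isMinOn_iff.1 (hstep (ψ j)) y hy

lemma IsMinOn.apply_of_sum {ι : Type*} [Fintype ι] [DecidableEq ι] {S : ι → Set ℝ}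
    {g : ι → ℝ → ℝ} {x : ι → ℝ} (hx : x ∈ univ.pi S)
    (hmin : IsMinOn (fun y => ∑ i, g i (y i)) (univ.pi S) x) (i : ι) :
    IsMinOn (g i) (S i) (x i) := by
  refine isMinOn_iff.2 fun t ht => ?_
  have hy : Function.update x i t ∈ univ.pi S := (update_mem_pi_iff_of_mem hx).2 fun _ => ht
  have h := isMinOn_iff.1 hmin _ hy
  rw [Fintype.sum_eq_add_sum_compl i, Fintype.sum_eq_add_sum_compl i (fun j => g j _),
    Function.update_self] at h
  have hrest : ∑ j ∈ {i}ᶜ, g j (Function.update x i t j) = ∑ j ∈ {i}ᶜ, g j (x j) :=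
    Finset.sum_congr rfl fun j hj => by rw [Function.update_of_ne (by simpa using hj)]
  simp only [hrest] at h
  linarith

lemma isMinOn_sq_sub_max_add {h : ℝ → ℝ} (heven : ∀ t, h (-t) = h t) (hzero : ∀ t, h 0 ≤ h t)
    {B t₀ : ℝ} (ht₀ : 0 ≤ t₀) (hmin : IsMinOn (fun t => (t - B) ^ 2 + h t) (Ici 0) t₀) :
    IsMinOn (fun t => (t - max 0 B) ^ 2 + h t) univ t₀ := by
  refine isMinOn_univ_iff.2 fun s => ?_
  rcases le_or_gt 0 B with hB | hB
  · rw [max_eq_right hB]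
    rcases le_or_gt 0 s with hs | hs
    · exact isMinOn_iff.1 hmin s hs
    · have h₁ := isMinOn_iff.1 hmin (-s) (neg_nonneg.2 hs.le)
      simp only [heven] at h₁
      nlinarith
  · rw [max_eq_left hB.le]
    have h₀ := isMinOn_iff.1 hmin 0 (mem_Ici.2 le_rfl)
    have ht₀0 : t₀ = 0 := by nlinarith [hzero t₀]
    subst ht₀0
    nlinarith [hzero s]

lemma rho_nonneg {a : ℝ} (ha : 0 ≤ a) (t : ℝ) : 0 ≤ rho a t := by
  unfold rho
  positivity

lemma rho_zero (a : ℝ) : rho a 0 = 0 := by simp [rho]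

lemma rho_neg (a t : ℝ) : rho a (-t) = rho a t := by simp [rho]

lemma Pa_nonneg {n : ℕ} {a : ℝ} (ha : 0 ≤ a) (x : Fin n → ℝ) : 0 ≤ Pa a x :=
  Finset.sum_nonneg fun _ _ => rho_nonneg ha _

lemma continuous_Pa {n : ℕ} {a : ℝ} (ha : 0 ≤ a) : Continuous (Pa (n := n) a) := by
  unfold Pa rho
  fun_prop (disch := intro; positivity)

lemma sqN_nonneg {n : ℕ} (v : Fin n → ℝ) : 0 ≤ sqN v :=
  Finset.sum_nonneg fun _ _ => sq_nonneg _

lemma sqN_eq_norm_sq {n : ℕ} (v : Fin n → ℝ) :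
    sqN v = ‖(WithLp.toLp 2 v : EuclideanSpace ℝ (Fin n))‖ ^ 2 := by
  simp [sqN, EuclideanSpace.norm_sq_eq]

lemma sqN_add {n : ℕ} (v w : Fin n → ℝ) : sqN (v + w) = sqN v + 2 * (v ⬝ᵥ w) + sqN w := by
  simp only [sqN, dotProduct, Pi.add_apply, Finset.mul_sum, ← Finset.sum_add_distrib]
  exact Finset.sum_congr rfl fun i _ => by ring

lemma sqN_smul {n : ℕ} (c : ℝ) (v : Fin n → ℝ) : sqN (c • v) = c ^ 2 * sqN v := by
  simp only [sqN, Pi.smul_apply, smul_eq_mul, Finset.mul_sum, mul_pow]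

lemma sqN_sub_add_mul_Pa {n : ℕ} (c a : ℝ) (x B : Fin n → ℝ) :
    sqN (x - B) + c * Pa a x = ∑ i, ((x i - B i) ^ 2 + c * rho a (x i)) := by
  simp only [sqN, Pa, Pi.sub_apply, Finset.mul_sum, Finset.sum_add_distrib]

lemma sqN_mulVec_le {m n : ℕ} (A : Matrix (Fin m) (Fin n) ℝ) (v : Fin n → ℝ) :
    sqN (A *ᵥ v) ≤ ‖A‖ ^ 2 * sqN v := by
  rw [sqN_eq_norm_sq, sqN_eq_norm_sq, ← mul_pow]
  exact pow_le_pow_left₀ (norm_nonneg _) (A.l2_opNorm_mulVec (WithLp.toLp 2 v)) 2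

lemma tendsto_zero_of_sqN_tendsto_zero {n : ℕ} {v : ℕ → Fin n → ℝ}
    (hv : Tendsto (fun k => sqN (v k)) atTop (𝓝 0)) : Tendsto v atTop (𝓝 0) := by
  have hnorm :
      Tendsto (fun k => ‖(WithLp.toLp 2 (v k) : EuclideanSpace ℝ (Fin n))‖) atTop (𝓝 0) := by
    have := hv.sqrt
    simpa only [sqN_eq_norm_sq, Real.sqrt_zero, Real.sqrt_sq (norm_nonneg _)] using this
  exact ((PiLp.continuous_ofLp 2 _).tendsto 0).comp (tendsto_zero_iff_norm_tendsto_zero.2 hnorm)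

lemma isMinOn_sqN_sub_projPos_add_mul_Pa {n : ℕ} {c a : ℝ} (hc : 0 ≤ c) (ha : 0 ≤ a)
    {B x : Fin n → ℝ} (hx : 0 ≤ x) (hmin : IsMinOn (fun y => sqN (y - B) + c * Pa a y) (Ici 0) x) :
    IsMinOn (fun y => sqN (y - projPos B) + c * Pa a y) univ x := by
  have hsep : IsMinOn (fun y => ∑ i, ((y i - B i) ^ 2 + c * rho a (y i)))
      (univ.pi fun _ => Ici 0) x := by
    simp only [sqN_sub_add_mul_Pa] at hmin
    rw [pi_univ_Ici]
    exact hmin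
  refine isMinOn_univ_iff.2 fun y => ?_
  simp only [sqN_sub_add_mul_Pa]
  exact Finset.sum_le_sum fun i _ => isMinOn_univ_iff.1
    (isMinOn_sq_sub_max_add (h := (c * rho a ·)) (fun t => by rw [rho_neg])
      (fun t => by simpa [rho_zero] using mul_nonneg hc (rho_nonneg ha t)) (hx i)
      (hsep.apply_of_sum (g := fun i t => (t - B i) ^ 2 + c * rho a t) (fun j _ => hx j) i))
    (y i)

section Surrogate

variable {m n : ℕ} (A : Matrix (Fin m) (Fin n) ℝ) (b : Fin m → ℝ) {lam a mu : ℝ}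

lemma C1_nonneg (hl : 0 ≤ lam) (ha : 0 ≤ a) (x : Fin n → ℝ) : 0 ≤ C1 A b lam a x :=
  add_nonneg (sqN_nonneg _) (mul_nonneg hl (Pa_nonneg ha x))

lemma C2_self (x : Fin n → ℝ) : C2 A b lam a mu x x = mu * C1 A b lam a x := by
  simp [C2, sqN]

lemma mul_C1_add_le_C2 (hmu : 0 ≤ mu) (x z : Fin n → ℝ) :
    mu * C1 A b lam a x + (1 - mu * ‖A‖ ^ 2) * sqN (x - z) ≤ C2 A b lam a mu x z := by
  have h := mul_le_mul_of_nonneg_left (sqN_mulVec_le A (x - z)) hmu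
  rw [mulVec_sub] at h
  unfold C2
  linarith

lemma C2_eq_sqN_sub_Bmu_add (x z : Fin n → ℝ) :
    C2 A b lam a mu x z =
      sqN (x - Bmu A b mu z) + lam * mu * Pa a x +
        (mu * sqN (A *ᵥ z - b) - mu ^ 2 * sqN (Aᵀ *ᵥ (A *ᵥ z - b))) := by
  set w : Fin n → ℝ := Aᵀ *ᵥ (A *ᵥ z - b) with hw
  have h1 : A *ᵥ x - b = A *ᵥ (x - z) + (A *ᵥ z - b) := by
    rw [mulVec_sub]
    abel
  have h2 : x - Bmu A b mu z = (x - z) + mu • w := by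
    rw [Bmu, ← neg_sub (A *ᵥ z), mulVec_neg, ← hw, smul_neg]
    abel
  have h3 : A *ᵥ (x - z) ⬝ᵥ (A *ᵥ z - b) = (x - z) ⬝ᵥ w := by
    rw [hw, mulVec_transpose, dotProduct_comm, dotProduct_mulVec, dotProduct_comm]
  rw [C2, C1, h1, h2, ← mulVec_sub, sqN_add, sqN_add, dotProduct_smul, sqN_smul, h3, smul_eq_mul]
  ring

lemma isMinOn_C2_iff {S : Set (Fin n → ℝ)} {x z : Fin n → ℝ} :
    IsMinOn (C2 A b lam a mu · z) S x ↔
      IsMinOn (fun y => sqN (y - Bmu A b mu z) + lam * mu * Pa a y) S x := by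
  simp only [isMinOn_iff, C2_eq_sqN_sub_Bmu_add, add_le_add_iff_right]

lemma continuous_C2 (ha : 0 ≤ a) : Continuous (Function.uncurry (C2 A b lam a mu)) := by
  have := continuous_Pa (n := n) ha
  unfold C2 C1 sqN Function.uncurry
  fun_prop

lemma tendsto_succ_sub_of_C2_le (hl : 0 ≤ lam) (ha : 0 ≤ a) (hmu : 0 ≤ mu)
    (hA : mu * ‖A‖ ^ 2 < 1) {x : ℕ → Fin n → ℝ}
    (hx : ∀ k, C2 A b lam a mu (x (k + 1)) (x k) ≤ C2 A b lam a mu (x k) (x k)) :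
    Tendsto (fun k => x (k + 1) - x k) atTop (𝓝 0) :=
  tendsto_zero_of_sqN_tendsto_zero <| tendsto_atTop_zero_of_succ_add_mul_le
    (e := fun k => mu * C1 A b lam a (x k)) (sub_pos.2 hA)
    (fun _ => mul_nonneg hmu (C1_nonneg A b hl ha _)) (fun _ => sqN_nonneg _)
    fun k => (mul_C1_add_le_C2 A b hmu _ _).trans ((hx k).trans_eq (C2_self A b _))

end Surrogate

open scoped Matrix.Norms.L2Operator in
theorem stmt19 {m n : ℕ} (A : Matrix (Fin m) (Fin n) ℝ) (b : Fin m → ℝ)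
    (lam a mu : ℝ) (hl : 0 < lam) (ha : 0 < a)
    (hmu : 0 < mu) (hmu2 : mu < 1 / ‖A‖ ^ 2)
    (xseq : ℕ → (Fin n → ℝ)) (hpos : ∀ k, 0 ≤ xseq k)
    (hstep : ∀ k, ∀ y : Fin n → ℝ, 0 ≤ y →
      C2 A b lam a mu (xseq (k + 1)) (xseq k) ≤ C2 A b lam a mu y (xseq k))
    (xstar : Fin n → ℝ) (hcl : MapClusterPt xstar Filter.atTop xseq) :
    0 ≤ xstar ∧
    ∀ x : Fin n → ℝ,
      sqN (xstar - projPos (Bmu A b mu xstar)) + lam * mu * Pa a xstar ≤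
        sqN (x - projPos (Bmu A b mu xstar)) + lam * mu * Pa a x := by
  have hA : mu * ‖A‖ ^ 2 < 1 := by
    rcases (sq_nonneg ‖A‖).eq_or_lt with h0 | h0
    · simp [← h0]
    · rwa [lt_div_iff₀ h0] at hmu2
  have hxstar : 0 ≤ xstar := isClosed_Ici.mem_of_mapClusterPt hcl (Eventually.of_forall hpos)
  have hlim : IsMinOn (C2 A b lam a mu · xstar) (Ici 0) xstar :=
    hcl.isMinOn_of_isMinOn_succ (continuous_C2 A b ha.le)
      (tendsto_succ_sub_of_C2_le A b hl.le ha.le hmu.le hA fun k => hstep k _ (hpos k))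
      fun k => isMinOn_iff.2 (hstep k)
  refine ⟨hxstar, isMinOn_univ_iff.1 <| isMinOn_sqN_sub_projPos_add_mul_Pa (by positivity) ha.le
    hxstar ((isMinOn_C2_iff A b).1 hlim)⟩
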